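/- Fix 1 ≤ t ≤ T, and suppose x_t ∈ X minimizes ∑_{τ=1}^{t−1} ℓ_τ(x) over x ∈ X and x_{t+1} ∈ X minimizes ∑_{τ=1}^{t} ℓ_τ(x) over x ∈ X. Then the per-step instantaneous regret satisfies ℓ_t(x_t) − ℓ_t(x_{t+1}) ≤ 2L²/(α·(2t − 1)). -/

import Mathlib

/-!
Both iterates minimize strongly convex functions, `∑_{τ<t} ℓ_τ` with modulus `(t - 1)α` and
`∑_{τ≤t} ℓ_τ` with modulus `tα`. Quadratic growth at each minimizer, evaluated at the other one,
adds up to `((2t - 1)α / 2) ‖x_t - x_{t+1}‖² ≤ ℓ_t(x_t) - ℓ_t(x_{t+1})`, while the Lipschitz bound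
caps the right-hand side by `L ‖x_t - x_{t+1}‖`; eliminating the distance gives the bound.
-/

open Filter Finset Set Topology

section StrongConvexity

variable {E : Type*} [NormedAddCommGroup E] [NormedSpace ℝ E] {s : Set E} {m n : ℝ}

lemma StrongConvexOn.add {f g : E → ℝ} (hf : StrongConvexOn s m f) (hg : StrongConvexOn s n g) :
    StrongConvexOn s (m + n) (f + g) := by
  refine (UniformConvexOn.add hf hg).mono fun r ↦ le_of_eq ?_
  simp only [Pi.add_apply]
  ring

lemma StrongConvexOn.sum {ι : Type*} {u : Finset ι} {f : ι → E → ℝ} {μ : ι → ℝ}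
    (hs : Convex ℝ s) (hf : ∀ i ∈ u, StrongConvexOn s (μ i) (f i)) :
    StrongConvexOn s (∑ i ∈ u, μ i) (fun x ↦ ∑ i ∈ u, f i x) := by
  classical
  induction u using Finset.induction_on with
  | empty => simpa using convexOn_const (0 : ℝ) hs
  | insert i u hi ih =>
    simp only [Finset.sum_insert hi]
    exact (hf i (mem_insert_self i u)).add (ih fun j hj ↦ hf j (mem_insert_of_mem hj))

/- Minimality at `x` against the point `(1 - b) • x + b • y` of the segment, then `b → 0⁺`. -/
lemma StrongConvexOn.add_sq_norm_sub_le_of_isMinOn {f : E → ℝ} {x y : E}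
    (hf : StrongConvexOn s m f) (hmin : IsMinOn f s x) (hx : x ∈ s) (hy : y ∈ s) :
    f x + m / 2 * ‖x - y‖ ^ 2 ≤ f y := by
  have hseg : ∀ b ∈ Ioo (0 : ℝ) 1, f x + (1 - b) * (m / 2 * ‖x - y‖ ^ 2) ≤ f y := by
    intro b ⟨hb0, hb1⟩
    have hz := isMinOn_iff.1 hmin _ (hf.1 hx hy (sub_nonneg.2 hb1.le) hb0.le (sub_add_cancel 1 b))
    have hconv := hf.2 hx hy (sub_nonneg.2 hb1.le) hb0.le (sub_add_cancel 1 b)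
    rw [smul_eq_mul, smul_eq_mul] at hconv
    have : b * (f x + (1 - b) * (m / 2 * ‖x - y‖ ^ 2)) ≤ b * f y := by linarith
    exact le_of_mul_le_mul_left this hb0
  have hlim : Tendsto (fun b : ℝ ↦ f x + (1 - b) * (m / 2 * ‖x - y‖ ^ 2)) (𝓝[>] 0)
      (𝓝 (f x + m / 2 * ‖x - y‖ ^ 2)) := by
    have : Continuous fun b : ℝ ↦ f x + (1 - b) * (m / 2 * ‖x - y‖ ^ 2) := by fun_prop
    simpa using this.continuousWithinAt.tendsto (x := 0) (s := Ioi 0)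
  exact le_of_tendsto hlim (mem_of_superset (Ioo_mem_nhdsGT zero_lt_one) hseg)

end StrongConvexity

/- `2r ≤ 2LD ≤ L² / c + c D² ≤ L² / c + r`. -/
lemma le_sq_div_of_mul_sq_le_of_le_mul {c r D L : ℝ} (hc : 0 < c) (hlow : c * D ^ 2 ≤ r)
    (hup : r ≤ L * D) : r ≤ L ^ 2 / c := by
  rw [le_div_iff₀ hc]
  nlinarith [sq_nonneg (L - c * D), mul_le_mul_of_nonneg_left hup hc.le]

theorem ftl_per_step_regret_general
    {d : ℕ} (X : Set (EuclideanSpace ℝ (Fin d)))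
    (hXconv : Convex ℝ X)
    (α L : ℝ) (hα : 0 < α)
    (T : ℕ) (ℓ : ℕ → EuclideanSpace ℝ (Fin d) → ℝ)
    (hsc : ∀ τ ∈ Finset.Icc 1 T, StrongConvexOn X α (ℓ τ))
    (hlip : ∀ τ ∈ Finset.Icc 1 T, ∀ x ∈ X, ∀ y ∈ X, |ℓ τ x - ℓ τ y| ≤ L * ‖x - y‖)
    (t : ℕ) (ht1 : 1 ≤ t) (htT : t ≤ T)
    (xt xt1 : EuclideanSpace ℝ (Fin d)) (hxt : xt ∈ X) (hxt1 : xt1 ∈ X)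
    (hxtmin : ∀ y ∈ X, ∑ τ ∈ Finset.Icc 1 (t - 1), ℓ τ xt ≤ ∑ τ ∈ Finset.Icc 1 (t - 1), ℓ τ y)
    (hxt1min : ∀ y ∈ X, ∑ τ ∈ Finset.Icc 1 t, ℓ τ xt1 ≤ ∑ τ ∈ Finset.Icc 1 t, ℓ τ y) :
    ℓ t xt - ℓ t xt1 ≤ 2 * L ^ 2 / (α * (2 * (t : ℝ) - 1)) := by
  obtain ⟨n, rfl⟩ := Nat.exists_eq_add_of_le' ht1
  rw [Nat.add_sub_cancel] at hxtmin
  simp only [Finset.sum_Icc_succ_top (Nat.le_add_left 1 n)] at hxt1min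
  have hpast : StrongConvexOn X (n * α) (fun x ↦ ∑ τ ∈ Finset.Icc 1 n, ℓ τ x) := by
    simpa using StrongConvexOn.sum hXconv fun τ hτ ↦
      hsc τ (Finset.Icc_subset_Icc le_rfl (by omega) hτ)
  have hnow := hpast.add (hsc (n + 1) (Finset.mem_Icc.2 ⟨ht1, htT⟩))
  have hgrowth_past := hpast.add_sq_norm_sub_le_of_isMinOn (isMinOn_iff.2 hxtmin) hxt hxt1
  have hgrowth_now := hnow.add_sq_norm_sub_le_of_isMinOn (isMinOn_iff.2 hxt1min) hxt1 hxt
  rw [norm_sub_rev] at hgrowth_now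
  have hlow : (2 * n + 1) * α / 2 * ‖xt - xt1‖ ^ 2 ≤ ℓ (n + 1) xt - ℓ (n + 1) xt1 := by
    simp only [Pi.add_apply] at hgrowth_now
    linarith
  have hup := (le_abs_self _).trans (hlip (n + 1) (Finset.mem_Icc.2 ⟨ht1, htT⟩) xt hxt xt1 hxt1)
  convert le_sq_div_of_mul_sq_le_of_le_mul (by positivity) hlow hup using 1
  push_cast
  rw [show 2 * ((n : ℝ) + 1) - 1 = 2 * n + 1 by ring]
  field_simp

/-- **FTL per-step instantaneous regret bound.**
If each `ℓ τ` is `α`-strongly convex and `L`-Lipschitz on the nonempty convex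
set `X ⊆ ℝ^d`, `x t ∈ X` minimizes `∑_{τ=1}^{t-1} ℓ τ` over `X` and
`x (t+1) ∈ X` minimizes `∑_{τ=1}^{t} ℓ τ` over `X`, then
`ℓ t (x t) - ℓ t (x (t+1)) ≤ 2L² / (α (2t - 1))`. -/
theorem ftl_per_step_regret
    {d : ℕ} (X : Set (EuclideanSpace ℝ (Fin d)))
    (hXne : X.Nonempty) (hXconv : Convex ℝ X)
    (α L : ℝ) (hα : 0 < α) (hL : 0 ≤ L)
    (T : ℕ) (ℓ : ℕ → EuclideanSpace ℝ (Fin d) → ℝ)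
    (hsc : ∀ τ ∈ Finset.Icc 1 T, StrongConvexOn X α (ℓ τ))
    (hlip : ∀ τ ∈ Finset.Icc 1 T, ∀ x ∈ X, ∀ y ∈ X, |ℓ τ x - ℓ τ y| ≤ L * ‖x - y‖)
    (t : ℕ) (ht1 : 1 ≤ t) (htT : t ≤ T)
    (xt xt1 : EuclideanSpace ℝ (Fin d)) (hxt : xt ∈ X) (hxt1 : xt1 ∈ X)
    (hxtmin : ∀ y ∈ X, ∑ τ ∈ Finset.Icc 1 (t - 1), ℓ τ xt ≤ ∑ τ ∈ Finset.Icc 1 (t - 1), ℓ τ y)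
    (hxt1min : ∀ y ∈ X, ∑ τ ∈ Finset.Icc 1 t, ℓ τ xt1 ≤ ∑ τ ∈ Finset.Icc 1 t, ℓ τ y) :
    ℓ t xt - ℓ t xt1 ≤ 2 * L ^ 2 / (α * (2 * (t : ℝ) - 1)) :=
  ftl_per_step_regret_general X hXconv α L hα T ℓ hsc hlip t ht1 htT xt xt1 hxt hxt1 hxtmin hxt1min
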